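/- arXiv:1306.2048 — 2 statements merged into one kernel-verified Lean document; each statement's English description precedes it below -/
import Mathlib

section
/- Let X = (X_1,…,X_m) and Z = (Z_1,…,Z_m) be random vectors in ℝ^m, and let f : ℝ^m → ℂ be three times differentiable with all third-order partial derivatives bounded: |∂³_{uvw} f(x)| ≤ L₃ for all x and all u, v, w. For each k let B_k ⊆ {1,…,k−1}, let B_k^c = {1,…,k−1}∖B_k, and define U_{k−1} = (U_1,…,U_{k−1}) by U_i = 0 if i ∈ B_k and U_i = X_i if i ∈ B_k^c. Then f(X) − f(Z) = R₁ + R₂ + R₃, where R₁ = Σ_{k=1}^m (X_k − Z_k) · ∂_k f(X_1,…,X_{k−1}, 0, Z_{k+1},…,Z_m), R₂ = (1/2) Σ_{k=1}^m (X_k² − Z_k²) · ∂²_k f(U_{k−1}, 0, Z_{k+1},…,Z_m), and |R₃| ≤ L₃ Σ_{k=1}^m (X_k² + Z_k²) Σ_{u∈B_k} |X_u| + L₃ Σ_{k=1}^m |X_k|³ + L₃ Σ_{k=1}^m |Z_k|³. -/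
open MeasureTheory ProbabilityTheory Filter Matrix
open scoped NNReal ENNReal

noncomputable section

namespace RMT

/-- Strict lexicographic order `p <lex q` on `ℤ × ℤ`. -/
def lexLT (p q : ℤ × ℤ) : Prop := p.1 < q.1 ∨ (p.1 = q.1 ∧ p.2 < q.2)

/-- Lexicographic order `p ≤lex q` on `ℤ × ℤ`. -/
def lexLE (p q : ℤ × ℤ) : Prop := p.1 < q.1 ∨ (p.1 = q.1 ∧ p.2 ≤ q.2)

/-- The index set `B^a_{ij}`. -/
def Bset (a : ℕ) (i j : ℤ) : Set (ℤ × ℤ) :=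
  {q | (a : ℤ) ≤ max |q.1 - i| |q.2 - j| ∧ lexLE q (i, j)}

variable {Ω : Type*} [MeasurableSpace Ω]

/-- σ-algebra generated by a family of real random variables indexed by a set. -/
def sigmaOn {ι : Type*} (Z : ι → Ω → ℝ) (S : Set ι) : MeasurableSpace Ω :=
  ⨆ i ∈ S, MeasurableSpace.comap (Z i) inferInstance

/-- `F^a_{ij}` : the σ-algebra generated by `X_{uv}`, `(u,v) ∈ B^a_{ij}`, `v ≤ u`. -/
def sigmaF (X : ℤ × ℤ → Ω → ℝ) (a : ℕ) (i j : ℤ) : MeasurableSpace Ω :=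
  sigmaOn X {q : ℤ × ℤ | q ∈ Bset a i j ∧ q.2 ≤ q.1}

/-- The symmetric `n × n` matrix built from entries `x (i,j)`, `1 ≤ j ≤ i ≤ n`. -/
def symMat (n : ℕ) (x : ℕ × ℕ → ℝ) : Matrix (Fin n) (Fin n) ℝ :=
  Matrix.of fun i j =>
    if (j : ℕ) ≤ (i : ℕ) then x ((i : ℕ) + 1, (j : ℕ) + 1) else x ((j : ℕ) + 1, (i : ℕ) + 1)

/-- `𝕏_n = n^{-1/2} X_n`. -/
def scaledMat (n : ℕ) (x : ℕ × ℕ → ℝ) : Matrix (Fin n) (Fin n) ℝ :=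
  (Real.sqrt n)⁻¹ • symMat n x

/-- Stieltjes transform of the empirical spectral distribution of a real matrix. -/
def stMat {n : ℕ} (A : Matrix (Fin n) (Fin n) ℝ) (z : ℂ) : ℂ :=
  (n : ℂ)⁻¹ * Matrix.trace ((A.map (fun t => (t : ℂ)) - z • (1 : Matrix (Fin n) (Fin n) ℂ))⁻¹)

/-- Empirical spectral distribution function of a (symmetric) real matrix. -/
def esd {n : ℕ} (A : Matrix (Fin n) (Fin n) ℝ) (t : ℝ) : ℝ :=
  if h : A.IsHermitian then (n : ℝ)⁻¹ * (Nat.card {k : Fin n // h.eigenvalues k ≤ t}) else 0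

/-- Lévy distance between two distribution functions. -/
def levyDist (F G : ℝ → ℝ) : ℝ :=
  sInf {ε : ℝ | 0 < ε ∧ ∀ x : ℝ, F (x - ε) - ε ≤ G x ∧ G x ≤ F (x + ε) + ε}

/-- The standard semicircle distribution function. -/
def semicircleCDF (x : ℝ) : ℝ :=
  ∫ t in Set.Iic x, (if |t| ≤ 2 then Real.sqrt (4 - t ^ 2) / (2 * Real.pi) else 0)

/-- The standard Marchenko–Pastur distribution function with ratio `y`. -/
def mpCDF (y : ℝ) (x : ℝ) : ℝ :=
  (if 1 < y ∧ 0 ≤ x then 1 - 1 / y else 0) +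
    ∫ t in Set.Iic x,
      (if (1 - Real.sqrt y) ^ 2 ≤ t ∧ t ≤ (1 + Real.sqrt y) ^ 2 then
        Real.sqrt (((1 + Real.sqrt y) ^ 2 - t) * (t - (1 - Real.sqrt y) ^ 2)) /
          (2 * Real.pi * t * y)
      else 0)

/-- `p × n` data matrix with entries `x (i,j)`, `1 ≤ i ≤ p`, `1 ≤ j ≤ n`. -/
def dataMat (p n : ℕ) (x : ℕ × ℕ → ℝ) : Matrix (Fin p) (Fin n) ℝ :=
  Matrix.of fun i j => x ((i : ℕ) + 1, (j : ℕ) + 1)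

/-- Sample covariance matrix `X Xᵀ / n`. -/
def covMat (p n : ℕ) (x : ℕ × ℕ → ℝ) : Matrix (Fin p) (Fin p) ℝ :=
  (n : ℝ)⁻¹ • (dataMat p n x * (dataMat p n x)ᵀ)


/-- Partial derivative of `f : ℝ^m → ℂ` in the `k`-th coordinate. -/
def pd {m : ℕ} (f : (Fin m → ℝ) → ℂ) (k : Fin m) : (Fin m → ℝ) → ℂ :=
  fun x => fderiv ℝ f x (Pi.single k 1)

/-!
Telescope `f x - f z` along the hybrid vectors whose first `j` coordinates come from `x` and
the others from `z`: the `k`-th increment only moves coordinate `k` from `z k` to `x k`.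
A second-order Taylor expansion in that coordinate around `0` leaves remainders bounded by
`L₃ |x k|³` and `L₃ |z k|³`. Moving the point at which `∂²_k f` is evaluated to `U_{k-1}`
costs at most `L₃ ∑_{u ∈ B k} |x u|`, because the partial derivatives of `∂²_k f` are bounded
by `L₃`, which makes it `L₃`-Lipschitz for the `ℓ¹` distance.
-/

section Taylor

variable {E : Type*} [NormedAddCommGroup E] [NormedSpace ℝ E]

theorem norm_le_mul_abs_pow_succ_of_hasDerivAt {h h' : ℝ → E} {C : ℝ} {n : ℕ}
    (hh : ∀ s, HasDerivAt h (h' s) s) (h0 : h 0 = 0) (hC : ∀ s, ‖h' s‖ ≤ C * |s| ^ n)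
    (t : ℝ) : ‖h t‖ ≤ C * |t| ^ (n + 1) := by
  have hC0 : 0 ≤ C := by simpa using (norm_nonneg _).trans (hC 1)
  have hbound : ∀ s ∈ Set.uIcc 0 t, ‖h' s‖ ≤ C * |t| ^ n := fun s hs => by
    have : |s| ≤ |t| := by
      simpa using Set.abs_sub_le_of_uIcc_subset_uIcc (Set.uIcc_subset_uIcc_left hs)
    exact (hC s).trans (by gcongr)
  have := (convex_uIcc 0 t).norm_image_sub_le_of_norm_hasDerivWithin_le
    (fun s _ => (hh s).hasDerivWithinAt) hbound Set.left_mem_uIcc Set.right_mem_uIcc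
  simpa [h0, pow_succ, mul_assoc] using this

theorem norm_taylor_two_sub_le {g g₁ g₂ g₃ : ℝ → E} {L : ℝ}
    (hg : ∀ s, HasDerivAt g (g₁ s) s) (hg₁ : ∀ s, HasDerivAt g₁ (g₂ s) s)
    (hg₂ : ∀ s, HasDerivAt g₂ (g₃ s) s) (hL : ∀ s, ‖g₃ s‖ ≤ L) (t : ℝ) :
    ‖g t - g 0 - t • g₁ 0 - (t ^ 2 / 2) • g₂ 0‖ ≤ L * |t| ^ 3 := by
  have step₂ : ∀ s, ‖g₂ s - g₂ 0‖ ≤ L * |s| ^ 1 :=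
    norm_le_mul_abs_pow_succ_of_hasDerivAt (fun s => (hg₂ s).sub_const _) (sub_self _)
      (by simpa using hL)
  have step₁ : ∀ s, ‖g₁ s - g₁ 0 - s • g₂ 0‖ ≤ L * |s| ^ 2 :=
    norm_le_mul_abs_pow_succ_of_hasDerivAt
      (fun s => (((hg₁ s).sub_const _).sub ((hasDerivAt_id s).smul_const (g₂ 0))).congr_deriv
        (by simp))
      (by simp) step₂
  refine norm_le_mul_abs_pow_succ_of_hasDerivAt
    (h := fun s => g s - g 0 - s • g₁ 0 - (s ^ 2 / 2) • g₂ 0) (fun s => ?_) (by simp) step₁ t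
  have hsq : HasDerivAt (fun s : ℝ => s ^ 2 / 2) s s := by
    simpa using (hasDerivAt_pow 2 s).div_const 2
  exact ((((hg s).sub_const _).sub ((hasDerivAt_id s).smul_const (g₁ 0))).sub
    (hsq.smul_const (g₂ 0))).congr_deriv (by simp)

end Taylor

section PartialDerivatives

open Function

variable {m : ℕ}

theorem contDiff_pd {n : ℕ∞} {F : (Fin m → ℝ) → ℂ} (hF : ContDiff ℝ (n + 1) F) (k : Fin m) :
    ContDiff ℝ n (pd F k) :=
  (hF.fderiv_right le_rfl).clm_apply contDiff_const

theorem hasDerivAt_comp_update {F : (Fin m → ℝ) → ℂ} (hF : Differentiable ℝ F)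
    (c : Fin m → ℝ) (k : Fin m) (s : ℝ) :
    HasDerivAt (fun t => F (update c k t)) (pd F k (update c k s)) s :=
  (hF _).hasFDerivAt.comp_hasDerivAt s (hasDerivAt_update c k s)

theorem norm_comp_update_sub_le {F : (Fin m → ℝ) → ℂ} {L : ℝ} (hF : Differentiable ℝ F)
    {k : Fin m} (hL : ∀ x, ‖pd F k x‖ ≤ L) (c : Fin m → ℝ) (a b : ℝ) :
    ‖F (update c k a) - F (update c k b)‖ ≤ L * |a - b| := by
  simpa using Convex.norm_image_sub_le_of_norm_hasDerivWithin_le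
    (fun s _ => (hasDerivAt_comp_update hF c k s).hasDerivWithinAt) (fun s _ => hL _)
    convex_univ (Set.mem_univ b) (Set.mem_univ a)

theorem norm_sub_le_of_norm_pd_le {F : (Fin m → ℝ) → ℂ} {L : ℝ} (hF : Differentiable ℝ F)
    (hL : ∀ x k, ‖pd F k x‖ ≤ L) (x y : Fin m → ℝ) :
    ‖F x - F y‖ ≤ L * ∑ k, |x k - y k| := by
  suffices H : ∀ S : Finset (Fin m), ‖F (S.piecewise x y) - F y‖ ≤ L * ∑ k ∈ S, |x k - y k| by
    simpa using H Finset.univ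
  intro S
  induction S using Finset.induction_on with
  | empty => simp
  | @insert k S hk ih =>
    have hstep : ‖F ((insert k S).piecewise x y) - F (S.piecewise x y)‖ ≤ L * |x k - y k| := by
      have := norm_comp_update_sub_le hF (hL · k) (S.piecewise x y) (x k) (S.piecewise x y k)
      rwa [update_eq_self, ← Finset.piecewise_insert,
        Finset.piecewise_eq_of_notMem _ _ _ hk] at this
    calc ‖F ((insert k S).piecewise x y) - F y‖
        ≤ ‖F ((insert k S).piecewise x y) - F (S.piecewise x y)‖ + ‖F (S.piecewise x y) - F y‖ :=
          norm_sub_le_norm_sub_add_norm_sub _ _ _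
      _ ≤ L * |x k - y k| + L * ∑ k ∈ S, |x k - y k| := add_le_add hstep ih
      _ = L * ∑ k ∈ insert k S, |x k - y k| := by rw [Finset.sum_insert hk, mul_add]

theorem norm_taylor_two_update_sub_le {f : (Fin m → ℝ) → ℂ} {L : ℝ} (hf : ContDiff ℝ 3 f)
    {k : Fin m} (hL : ∀ x, ‖pd (pd (pd f k) k) k x‖ ≤ L) (c : Fin m → ℝ) (t : ℝ) :
    ‖f (update c k t) - f (update c k 0) - t • pd f k (update c k 0)
      - (t ^ 2 / 2) • pd (pd f k) k (update c k 0)‖ ≤ L * |t| ^ 3 := by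
  have hf₁ : ContDiff ℝ 2 (pd f k) := contDiff_pd (n := 2) hf k
  have hf₂ : ContDiff ℝ 1 (pd (pd f k) k) := contDiff_pd (n := 1) hf₁ k
  exact norm_taylor_two_sub_le (hasDerivAt_comp_update (hf.differentiable (by norm_num)) c k)
    (hasDerivAt_comp_update (hf₁.differentiable (by norm_num)) c k)
    (hasDerivAt_comp_update (hf₂.differentiable (by norm_num)) c k) (fun _ => hL _) t

end PartialDerivatives

section Lindeberg

open Function

variable {m : ℕ}

theorem norm_taylor_two_update_sub_update_le {f : (Fin m → ℝ) → ℂ} {L : ℝ}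
    (hf : ContDiff ℝ 3 f) {k : Fin m} (hL : ∀ x, ‖pd (pd (pd f k) k) k x‖ ≤ L)
    (c y : Fin m → ℝ) (a b : ℝ) :
    ‖f (update c k a) - f (update c k b) -
        (((a - b : ℝ) : ℂ) * pd f k (update c k 0) +
          (1 / 2 : ℂ) * (((a ^ 2 - b ^ 2 : ℝ) : ℂ) * pd (pd f k) k y))‖ ≤
      (a ^ 2 + b ^ 2) * ‖pd (pd f k) k (update c k 0) - pd (pd f k) k y‖ +
        L * |a| ^ 3 + L * |b| ^ 3 := by
  set c₀ := update c k 0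
  set T : ℝ → ℂ := fun t => f (update c k t) - f c₀ - t • pd f k c₀
    - (t ^ 2 / 2) • pd (pd f k) k c₀ with hT
  have hsplit : f (update c k a) - f (update c k b) -
        (((a - b : ℝ) : ℂ) * pd f k c₀ +
          (1 / 2 : ℂ) * (((a ^ 2 - b ^ 2 : ℝ) : ℂ) * pd (pd f k) k y)) =
      ((a ^ 2 - b ^ 2) / 2 : ℝ) • (pd (pd f k) k c₀ - pd (pd f k) k y) + (T a - T b) := by
    simp only [hT, Complex.real_smul]
    push_cast
    ring
  have hcoef : |(a ^ 2 - b ^ 2) / 2| ≤ a ^ 2 + b ^ 2 := by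
    rw [abs_le]; constructor <;> nlinarith [sq_nonneg a, sq_nonneg b]
  rw [hsplit]
  calc _ ≤ |(a ^ 2 - b ^ 2) / 2| * ‖pd (pd f k) k c₀ - pd (pd f k) k y‖ + (‖T a‖ + ‖T b‖) := by
        grw [norm_add_le, norm_smul, Real.norm_eq_abs, norm_sub_le (T a) (T b)]
    _ ≤ _ := by
        grw [hcoef, norm_taylor_two_update_sub_le hf hL c a,
          norm_taylor_two_update_sub_le hf hL c b]
        rw [add_assoc]

-- Indexed by `ℕ` rather than `Fin m` so that `hybrid x z m = x` is one of the hybrids.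
def hybrid (x z : Fin m → ℝ) (j : ℕ) : Fin m → ℝ :=
  fun i => if (i : ℕ) < j then x i else z i

theorem sub_eq_sum_update_hybrid (f : (Fin m → ℝ) → ℂ) (x z : Fin m → ℝ) :
    f x - f z = ∑ k : Fin m,
      (f (update (hybrid x z k) k (x k)) - f (update (hybrid x z k) k (z k))) := by
  have hsucc : ∀ k : Fin m, update (hybrid x z k) k (x k) = hybrid x z (k + 1) := by
    intro k
    funext i
    simp only [update_apply, hybrid]
    split_ifs <;> subst_vars <;> first | rfl | omega
  have hself : ∀ k : Fin m, update (hybrid x z k) k (z k) = hybrid x z k :=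
    fun k => update_eq_self_iff.mpr (if_neg (lt_irrefl _)).symm
  have hlast : hybrid x z m = x := funext fun i => if_pos i.isLt
  have hfirst : hybrid x z 0 = z := funext fun i => if_neg (Nat.not_lt_zero i)
  simp only [hsucc, hself]
  rw [Fin.sum_univ_eq_sum_range (fun j => f (hybrid x z (j + 1)) - f (hybrid x z j)),
    Finset.sum_range_sub (fun j => f (hybrid x z j)), hlast, hfirst]

def lindebergPoint (x z : Fin m → ℝ) (k : Fin m) : Fin m → ℝ :=
  fun i => if i < k then x i else if i = k then 0 else z i

def lindebergPointOff (B : Finset (Fin m)) (x z : Fin m → ℝ) (k : Fin m) : Fin m → ℝ :=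
  fun i => if i < k then (if i ∈ B then 0 else x i) else if i = k then 0 else z i

theorem sum_abs_lindebergPoint_sub_lindebergPointOff_le (B : Finset (Fin m)) (x z : Fin m → ℝ)
    (k : Fin m) :
    ∑ i, |lindebergPoint x z k i - lindebergPointOff B x z k i| ≤ ∑ i ∈ B, |x i| := by
  calc _ ≤ ∑ i, if i ∈ B then |x i| else 0 := Finset.sum_le_sum fun i _ => by
        unfold lindebergPoint lindebergPointOff
        split_ifs <;> simp
    _ = ∑ i ∈ B, |x i| := by rw [Finset.sum_ite_mem, Finset.univ_inter]

theorem update_hybrid_zero (x z : Fin m → ℝ) (k : Fin m) :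
    update (hybrid x z k) k 0 = lindebergPoint x z k := by
  funext i
  simp only [update_apply, hybrid, lindebergPoint, Fin.lt_def]
  split_ifs <;> subst_vars <;> first | rfl | omega

def lindebergRemainder (f : (Fin m → ℝ) → ℂ) (B : Fin m → Finset (Fin m)) (x z : Fin m → ℝ) : ℂ :=
  f x - f z -
    ((∑ k : Fin m, ((x k - z k : ℝ) : ℂ) * pd f k (lindebergPoint x z k)) +
      (1 / 2 : ℂ) * (∑ k : Fin m, (((x k) ^ 2 - (z k) ^ 2 : ℝ) : ℂ) *
        pd (pd f k) k (lindebergPointOff (B k) x z k)))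

theorem norm_lindebergRemainder_le {f : (Fin m → ℝ) → ℂ} {L₃ : ℝ} (hf : ContDiff ℝ 3 f)
    (hL3 : ∀ (x : Fin m → ℝ) (u v w : Fin m), ‖pd (pd (pd f w) v) u x‖ ≤ L₃)
    (B : Fin m → Finset (Fin m)) (x z : Fin m → ℝ) :
    ‖lindebergRemainder f B x z‖ ≤
      L₃ * ∑ k : Fin m, ((x k) ^ 2 + (z k) ^ 2) * (∑ u ∈ B k, |x u|) +
        L₃ * ∑ k : Fin m, |x k| ^ 3 + L₃ * ∑ k : Fin m, |z k| ^ 3 := by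
  have hterm : ∀ k : Fin m,
      ‖f (update (hybrid x z k) k (x k)) - f (update (hybrid x z k) k (z k)) -
        (((x k - z k : ℝ) : ℂ) * pd f k (lindebergPoint x z k) +
          (1 / 2 : ℂ) * ((((x k) ^ 2 - (z k) ^ 2 : ℝ) : ℂ) *
            pd (pd f k) k (lindebergPointOff (B k) x z k)))‖ ≤
        L₃ * (((x k) ^ 2 + (z k) ^ 2) * ∑ u ∈ B k, |x u|) + L₃ * |x k| ^ 3 + L₃ * |z k| ^ 3 := by
    intro k
    have hL₀ : 0 ≤ L₃ := (norm_nonneg _).trans (hL3 x k k k)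
    have hsecond := norm_sub_le_of_norm_pd_le
      ((contDiff_pd (n := 1) (contDiff_pd (n := 2) hf k) k).differentiable (by norm_num))
      (fun y u => hL3 y u k k) (lindebergPoint x z k) (lindebergPointOff (B k) x z k)
    have := norm_taylor_two_update_sub_update_le hf (hL3 · k k k) (hybrid x z k)
      (lindebergPointOff (B k) x z k) (x k) (z k)
    rw [update_hybrid_zero] at this
    refine this.trans ?_
    grw [hsecond, sum_abs_lindebergPoint_sub_lindebergPointOff_le]
    rw [mul_left_comm]
  unfold lindebergRemainder
  rw [sub_eq_sum_update_hybrid f x z, Finset.mul_sum, ← Finset.sum_add_distrib,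
    ← Finset.sum_sub_distrib]
  calc _ ≤ _ := norm_sum_le _ _
    _ ≤ _ := Finset.sum_le_sum fun k _ => hterm k
    _ = _ := by simp only [Finset.sum_add_distrib, Finset.mul_sum]

end Lindeberg

theorem lindeberg_decomposition_general {m : ℕ}
    (f : (Fin m → ℝ) → ℂ) (L₃ : ℝ)
    (hf : ContDiff ℝ 3 f)
    (hL3 : ∀ (x : Fin m → ℝ) (u v w : Fin m), ‖pd (pd (pd f w) v) u x‖ ≤ L₃)
    (X Z : Ω → Fin m → ℝ)
    (B : Fin m → Finset (Fin m)) :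
    ∃ R₃ : Ω → ℂ, ∀ ω : Ω,
      (f (X ω) - f (Z ω) =
        (∑ k : Fin m, ((X ω k - Z ω k : ℝ) : ℂ) *
          pd f k (fun i => if i < k then X ω i else if i = k then 0 else Z ω i)) +
        (1 / 2 : ℂ) * (∑ k : Fin m, (((X ω k) ^ 2 - (Z ω k) ^ 2 : ℝ) : ℂ) *
          pd (pd f k) k (fun i =>
            if i < k then (if i ∈ B k then 0 else X ω i)
            else if i = k then 0 else Z ω i)) +
        R₃ ω) ∧
      ‖R₃ ω‖ ≤
        L₃ * ∑ k : Fin m, ((X ω k) ^ 2 + (Z ω k) ^ 2) * (∑ u ∈ B k, |X ω u|) +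
          L₃ * ∑ k : Fin m, |X ω k| ^ 3 + L₃ * ∑ k : Fin m, |Z ω k| ^ 3 :=
  ⟨fun ω => lindebergRemainder f B (X ω) (Z ω), fun ω =>
    ⟨(add_sub_cancel _ _).symm, norm_lindebergRemainder_le hf hL3 B (X ω) (Z ω)⟩⟩

/-- Proposition (Lindeberg-type telescoping decomposition with partial replacement): for a
three times differentiable `f` with third-order partial derivatives bounded by `L₃`, and
random vectors `X`, `Z`, one has `f(X) - f(Z) = R₁ + R₂ + R₃` with the explicit first and
second order terms `R₁`, `R₂` (evaluated at partially replaced vectors, with the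
coordinates in `B_k` set to `0` in the second order term) and remainder `R₃` bounded by
`L₃ Σ_k (X_k² + Z_k²) Σ_{u ∈ B_k} |X_u| + L₃ Σ_k |X_k|³ + L₃ Σ_k |Z_k|³`. -/
theorem lindeberg_decomposition {m : ℕ}
    (f : (Fin m → ℝ) → ℂ) (L₃ : ℝ)
    (hf : ContDiff ℝ 3 f)
    (hL3 : ∀ (x : Fin m → ℝ) (u v w : Fin m), ‖pd (pd (pd f w) v) u x‖ ≤ L₃)
    (X Z : Ω → Fin m → ℝ)
    (B : Fin m → Finset (Fin m)) (hB : ∀ k, ∀ i ∈ B k, i < k) :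
    ∃ R₃ : Ω → ℂ, ∀ ω : Ω,
      (f (X ω) - f (Z ω) =
        (∑ k : Fin m, ((X ω k - Z ω k : ℝ) : ℂ) *
          pd f k (fun i => if i < k then X ω i else if i = k then 0 else Z ω i)) +
        (1 / 2 : ℂ) * (∑ k : Fin m, (((X ω k) ^ 2 - (Z ω k) ^ 2 : ℝ) : ℂ) *
          pd (pd f k) k (fun i =>
            if i < k then (if i ∈ B k then 0 else X ω i)
            else if i = k then 0 else Z ω i)) +
        R₃ ω) ∧
      ‖R₃ ω‖ ≤
        L₃ * ∑ k : Fin m, ((X ω k) ^ 2 + (Z ω k) ^ 2) * (∑ u ∈ B k, |X ω u|) +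
          L₃ * ∑ k : Fin m, |X ω k| ^ 3 + L₃ * ∑ k : Fin m, |Z ω k| ^ 3 :=
  lindeberg_decomposition_general f L₃ hf hL3 X Z B

end RMT
end
end

section
/- Let k_n = n(n+1)/2, let x = (x_{ij})_{1≤j≤i≤n} and y = (y_{ij})_{1≤j≤i≤n} be two elements of ℝ^{k_n}, and let z = u + iv ∈ ℂ⁺ with v > 0. Let s(·) = s(·, z) be the map from ℝ^{k_n} to ℂ defined by s(x) = n^{−1} Tr((A_n(x) − z I_n)^{−1}), where A_n(x) is the symmetric n×n matrix with (A_n(x))_{ij} = n^{−1/2} x_{ij} for 1 ≤ j ≤ i ≤ n and (A_n(x))_{ij} = n^{−1/2} x_{ji} for i < j. Then |s(x) − s(y)| ≤ v^{−2} ( n^{−2} [ Σ_{i=1}^n (x_{ii} − y_{ii})² + 2 Σ_{1≤j<i≤n} (x_{ij} − y_{ij})² ] )^{1/2}. -/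
/-! Write `R(x) = (A_n(x) - z)⁻¹`. The resolvent identity
`R(x) - R(y) = R(x) (A_n(y) - A_n(x)) R(y)` turns `n (s(x) - s(y))` into
`-tr ((A_n(x) - A_n(y)) R(y) R(x))`, which Cauchy–Schwarz bounds by the Frobenius norm of
`A_n(x) - A_n(y)` times that of `R(y) R(x)`. The latter is at most `√n` times its operator norm,
and `‖R(x)‖ ≤ v⁻¹` because for Hermitian `A` the imaginary part of `⟪w, (A - z) w⟫` is
`-v ‖w‖²`, whence `‖(A - z) w‖ ≥ v ‖w‖`. Finally the squared Frobenius norm of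
`A_n(x) - A_n(y)` is `n⁻¹ [Σᵢ (x_{ii} - y_{ii})² + 2 Σ_{j<i} (x_{ij} - y_{ij})²]`. -/

open MeasureTheory ProbabilityTheory Filter Matrix
open scoped NNReal ENNReal

noncomputable section

open WithLp
open scoped InnerProductSpace

theorem Finset.sum_range_sum_range_eq_of_symmetric {R : Type*} [CommSemiring R]
    (f : ℕ → ℕ → R) (hf : ∀ i j, f i j = f j i) (n : ℕ) :
    ∑ i ∈ range n, ∑ j ∈ range n, f i j =
      ∑ i ∈ range n, f i i + 2 * ∑ i ∈ range n, ∑ j ∈ range i, f i j := by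
  induction n with
  | zero => simp
  | succ m ih =>
    simp only [sum_range_succ, sum_add_distrib, ih, hf _ m]
    ring

theorem Finset.sum_Icc_one_eq_sum_range {M : Type*} [AddCommMonoid M] (f : ℕ → M) (n : ℕ) :
    ∑ i ∈ Icc 1 n, f i = ∑ i ∈ range n, f (i + 1) := by
  rw [← Ico_add_one_right_eq_Icc, sum_Ico_eq_sum_range]
  simp [add_comm]

theorem LinearMap.IsSymmetric.abs_im_mul_norm_le_norm_sub_smul {E : Type*} [NormedAddCommGroup E]
    [InnerProductSpace ℂ E] {T : E →ₗ[ℂ] E} (hT : T.IsSymmetric) (z : ℂ) (w : E) :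
    |z.im| * ‖w‖ ≤ ‖T w - z • w‖ := by
  have hreal : (⟪w, T w⟫_ℂ).im = 0 := hT.im_inner_self_apply w
  have him : (⟪w, T w - z • w⟫_ℂ).im = -(z.im * ‖w‖ ^ 2) := by
    rw [inner_sub_right, inner_smul_right, inner_self_eq_norm_sq_to_K, Complex.sub_im, hreal]
    simp [Complex.mul_im, ← Complex.ofReal_pow]
  have hsq : |z.im| * ‖w‖ ^ 2 ≤ ‖w‖ * ‖T w - z • w‖ := calc
    |z.im| * ‖w‖ ^ 2 = |(⟪w, T w - z • w⟫_ℂ).im| := by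
      rw [him, abs_neg, abs_mul, abs_of_nonneg (sq_nonneg ‖w‖)]
    _ ≤ ‖⟪w, T w - z • w⟫_ℂ‖ := Complex.abs_im_le_norm _
    _ ≤ ‖w‖ * ‖T w - z • w‖ := norm_inner_le_norm _ _
  rcases (norm_nonneg w).eq_or_lt with hw | hw
  · rw [← hw, mul_zero]; positivity
  · nlinarith

namespace Matrix

theorem norm_trace_mul_le {m n α : Type*} [Fintype m] [Fintype n] [SeminormedRing α]
    (D : Matrix m n α) (X : Matrix n m α) :
    ‖trace (D * X)‖ ≤ √(∑ i, ∑ j, ‖D i j‖ ^ 2) * √(∑ i, ∑ j, ‖X j i‖ ^ 2) := calc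
  ‖trace (D * X)‖ = ‖∑ p : m × n, D p.1 p.2 * X p.2 p.1‖ := by
    simp only [trace, diag, mul_apply, Fintype.sum_prod_type]
  _ ≤ ∑ p : m × n, ‖D p.1 p.2‖ * ‖X p.2 p.1‖ :=
    norm_sum_le_of_le _ fun p _ => norm_mul_le _ _
  _ ≤ _ := by
    simpa only [Fintype.sum_prod_type] using
      Real.sum_mul_le_sqrt_mul_sqrt Finset.univ (fun p : m × n => ‖D p.1 p.2‖)
        (fun p => ‖X p.2 p.1‖)

open scoped Matrix.Norms.L2Operator

theorem sum_sq_norm_apply_le_card_mul_sq_l2_opNorm {m n 𝕜 : Type*} [Fintype m] [Fintype n]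
    [DecidableEq n] [RCLike 𝕜] (X : Matrix m n 𝕜) :
    ∑ j, ∑ i, ‖X i j‖ ^ 2 ≤ Fintype.card n * ‖X‖ ^ 2 := by
  have hcol : ∀ j, ∑ i, ‖X i j‖ ^ 2 ≤ ‖X‖ ^ 2 := fun j => by
    have hXj := X.l2_opNorm_mulVec (EuclideanSpace.single j 1)
    rw [PiLp.norm_single, norm_one, mul_one, ← sq_le_sq₀ (norm_nonneg _) (norm_nonneg _),
      EuclideanSpace.norm_sq_eq] at hXj
    simpa using hXj
  calc ∑ j, ∑ i, ‖X i j‖ ^ 2 ≤ ∑ _j : n, ‖X‖ ^ 2 := Finset.sum_le_sum fun j _ => hcol j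
    _ = Fintype.card n * ‖X‖ ^ 2 := by simp

variable {n : Type*} [Fintype n] [DecidableEq n] {A : Matrix n n ℂ} {z : ℂ}

theorem IsHermitian.abs_im_mul_norm_le_norm_sub_smul_one_mulVec (hA : A.IsHermitian) (z : ℂ)
    (v : n → ℂ) : |z.im| * ‖toLp 2 v‖ ≤ ‖toLp 2 ((A - z • 1) *ᵥ v)‖ := by
  rw [sub_mulVec, smul_mulVec, one_mulVec, toLp_sub, toLp_smul]
  exact (isSymmetric_toEuclideanLin_iff.2 hA).abs_im_mul_norm_le_norm_sub_smul z (toLp 2 v)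

theorem IsHermitian.isUnit_sub_smul_one (hA : A.IsHermitian) (hz : z.im ≠ 0) :
    IsUnit (A - z • 1) := by
  rw [← mulVec_injective_iff_isUnit]
  intro a b hab
  have hbound := hA.abs_im_mul_norm_le_norm_sub_smul_one_mulVec z (a - b)
  rw [mulVec_sub, hab, sub_self, toLp_zero, norm_zero] at hbound
  have : toLp 2 (a - b) = 0 := norm_le_zero_iff.1 <|
    nonpos_of_mul_nonpos_right hbound (abs_pos.2 hz)
  exact sub_eq_zero.1 (congrArg ofLp this)

theorem IsHermitian.l2_opNorm_inv_sub_smul_one_le (hA : A.IsHermitian) (hz : z.im ≠ 0) :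
    ‖(A - z • 1)⁻¹‖ ≤ |z.im|⁻¹ := by
  rw [← l2_opNorm_toEuclideanCLM]
  refine ContinuousLinearMap.opNorm_le_bound _ (by positivity) fun v => ?_
  have hinv : (A - z • 1) * (A - z • 1)⁻¹ = 1 :=
    mul_nonsing_inv _ ((A - z • 1).isUnit_iff_isUnit_det.1 (hA.isUnit_sub_smul_one hz))
  have := hA.abs_im_mul_norm_le_norm_sub_smul_one_mulVec z ((A - z • 1)⁻¹ *ᵥ ofLp v)
  rw [mulVec_mulVec, hinv, one_mulVec, toLp_ofLp] at this
  rw [inv_mul_eq_div, le_div_iff₀' (abs_pos.2 hz)]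
  exact this

theorem IsHermitian.norm_trace_inv_sub_smul_one_sub_le {B : Matrix n n ℂ} (hA : A.IsHermitian)
    (hB : B.IsHermitian) (hz : z.im ≠ 0) :
    ‖trace (A - z • 1)⁻¹ - trace (B - z • 1)⁻¹‖ ≤
      √(∑ i, ∑ j, ‖(A - B) i j‖ ^ 2) * (√(Fintype.card n) * (z.im ^ 2)⁻¹) := by
  set RA := (A - z • 1)⁻¹
  set RB := (B - z • 1)⁻¹
  have hresolvent : trace RA - trace RB = -trace ((A - B) * (RB * RA)) := calc
    trace RA - trace RB = trace (RA * (B - A) * RB) := by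
      rw [← trace_sub, inv_sub_inv (iff_of_true (hA.isUnit_sub_smul_one hz)
        (hB.isUnit_sub_smul_one hz)), sub_sub_sub_cancel_right]
    _ = -trace ((A - B) * (RB * RA)) := by
      rw [trace_mul_cycle, trace_mul_comm, ← trace_neg, ← neg_mul, neg_sub]
  have hX : ‖RB * RA‖ ≤ (z.im ^ 2)⁻¹ := calc
    ‖RB * RA‖ ≤ ‖RB‖ * ‖RA‖ := l2_opNorm_mul _ _
    _ ≤ |z.im|⁻¹ * |z.im|⁻¹ := by
      gcongr
      exacts [hB.l2_opNorm_inv_sub_smul_one_le hz, hA.l2_opNorm_inv_sub_smul_one_le hz]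
    _ = (z.im ^ 2)⁻¹ := by rw [← mul_inv, ← abs_mul, ← sq, abs_sq]
  have hXfrob : √(∑ i, ∑ j, ‖(RB * RA) j i‖ ^ 2) ≤ √(Fintype.card n) * (z.im ^ 2)⁻¹ := by
    rw [← Real.sqrt_sq (by positivity : 0 ≤ (z.im ^ 2)⁻¹), ← Real.sqrt_mul (by positivity)]
    gcongr
    exact (sum_sq_norm_apply_le_card_mul_sq_l2_opNorm _).trans (by gcongr)
  rw [hresolvent, norm_neg]
  exact (norm_trace_mul_le _ _).trans (by gcongr)

end Matrix

namespace RMT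

theorem symMat_apply_eq_max_min (n : ℕ) (x : ℕ × ℕ → ℝ) (i j : Fin n) :
    symMat n x i j = x (max (i : ℕ) j + 1, min (i : ℕ) j + 1) := by
  simp only [symMat, of_apply]
  split_ifs with h
  · rw [max_eq_left h, min_eq_right h]
  · rw [max_eq_right (not_le.1 h).le, min_eq_left (not_le.1 h).le]

theorem symMat_isSymm (n : ℕ) (x : ℕ × ℕ → ℝ) : (symMat n x).IsSymm :=
  IsSymm.ext fun i j => by simp only [symMat_apply_eq_max_min, max_comm, min_comm]

theorem symMat_sub (n : ℕ) (x y : ℕ × ℕ → ℝ) : symMat n x - symMat n y = symMat n (x - y) := by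
  ext i j
  simp only [Matrix.sub_apply, symMat_apply_eq_max_min, Pi.sub_apply]

theorem isHermitian_map_scaledMat (n : ℕ) (x : ℕ × ℕ → ℝ) :
    ((scaledMat n x).map (fun t => (t : ℂ))).IsHermitian :=
  IsHermitian.map (isHermitian_iff_isSymm.2 ((symMat_isSymm n x).smul _)) _
    fun t => (Complex.conj_ofReal t).symm

theorem sum_sq_symMat (n : ℕ) (x : ℕ × ℕ → ℝ) :
    ∑ i, ∑ j, symMat n x i j ^ 2 =
      ∑ i ∈ Finset.Icc 1 n, x (i, i) ^ 2 +
        2 * ∑ i ∈ Finset.Icc 1 n, ∑ j ∈ Finset.Icc 1 (i - 1), x (i, j) ^ 2 := by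
  set g : ℕ → ℕ → ℝ := fun a b => x (max a b + 1, min a b + 1) ^ 2
  have hdiag : ∀ i, g i i = x (i + 1, i + 1) ^ 2 := fun i => by simp only [g, max_self, min_self]
  have hoff : ∀ i, ∑ j ∈ Finset.range i, g i j =
      ∑ j ∈ Finset.Icc 1 (i + 1 - 1), x (i + 1, j) ^ 2 := fun i => by
    rw [Nat.add_sub_cancel, Finset.sum_Icc_one_eq_sum_range]
    refine Finset.sum_congr rfl fun j hj => ?_
    have hji := (Finset.mem_range.1 hj).le
    simp only [g, max_eq_left hji, min_eq_right hji]
  calc ∑ i, ∑ j, symMat n x i j ^ 2 = ∑ i ∈ Finset.range n, ∑ j ∈ Finset.range n, g i j := by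
        simp only [symMat_apply_eq_max_min]
        rw [← Fin.sum_univ_eq_sum_range (fun i => ∑ j ∈ Finset.range n, g i j)]
        simp only [← Fin.sum_univ_eq_sum_range (g _), g]
    _ = _ := by
      rw [Finset.sum_range_sum_range_eq_of_symmetric g
          (fun i j => by simp only [g, max_comm, min_comm]),
        Finset.sum_Icc_one_eq_sum_range, Finset.sum_Icc_one_eq_sum_range]
      simp only [hdiag, hoff]

theorem sum_sq_norm_map_scaledMat_sub (n : ℕ) (x y : ℕ × ℕ → ℝ) :
    ∑ i, ∑ j, ‖((scaledMat n x).map (fun t => (t : ℂ)) -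
        (scaledMat n y).map (fun t => (t : ℂ))) i j‖ ^ 2 =
      (n : ℝ)⁻¹ * (∑ i ∈ Finset.Icc 1 n, (x (i, i) - y (i, i)) ^ 2 +
        2 * ∑ i ∈ Finset.Icc 1 n, ∑ j ∈ Finset.Icc 1 (i - 1), (x (i, j) - y (i, j)) ^ 2) := by
  have hentry : ∀ i j, ‖((scaledMat n x).map (fun t => (t : ℂ)) -
      (scaledMat n y).map (fun t => (t : ℂ))) i j‖ ^ 2 = (n : ℝ)⁻¹ * symMat n (x - y) i j ^ 2 := by
    intro i j
    rw [← symMat_sub]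
    simp only [Matrix.sub_apply, map_apply, scaledMat, Matrix.smul_apply, smul_eq_mul,
      ← Complex.ofReal_sub, Complex.norm_real, Real.norm_eq_abs, sq_abs, ← mul_sub, mul_pow,
      inv_pow, Real.sq_sqrt (Nat.cast_nonneg n)]
  simp only [hentry, ← Finset.mul_sum, sum_sq_symMat, Pi.sub_apply]

/-- Lemma (Lipschitz property of the Stieltjes transform in the matrix entries): for
`z = u + iv` with `v > 0`,
`|s(x) - s(y)| ≤ v⁻² (n⁻² [Σᵢ (x_{ii} - y_{ii})² + 2 Σ_{j<i} (x_{ij} - y_{ij})²])^{1/2}`. -/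
theorem stieltjes_transform_lipschitz
    (n : ℕ) (x y : ℕ × ℕ → ℝ) (z : ℂ) (hz : 0 < z.im) :
    ‖stMat (scaledMat n x) z - stMat (scaledMat n y) z‖ ≤
      (z.im ^ 2)⁻¹ * Real.sqrt (((n : ℝ) ^ 2)⁻¹ *
        ((∑ i ∈ Finset.Icc 1 n, (x (i, i) - y (i, i)) ^ 2) +
          2 * ∑ i ∈ Finset.Icc 1 n, ∑ j ∈ Finset.Icc 1 (i - 1), (x (i, j) - y (i, j)) ^ 2)) := by
  set Q := (∑ i ∈ Finset.Icc 1 n, (x (i, i) - y (i, i)) ^ 2) +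
    2 * ∑ i ∈ Finset.Icc 1 n, ∑ j ∈ Finset.Icc 1 (i - 1), (x (i, j) - y (i, j)) ^ 2
  have htrace := (isHermitian_map_scaledMat n x).norm_trace_inv_sub_smul_one_sub_le
    (isHermitian_map_scaledMat n y) hz.ne'
  rw [sum_sq_norm_map_scaledMat_sub, Fintype.card_fin] at htrace
  calc ‖stMat (scaledMat n x) z - stMat (scaledMat n y) z‖
      = (n : ℝ)⁻¹ * ‖trace ((scaledMat n x).map (fun t => (t : ℂ)) - z • 1)⁻¹ -
          trace ((scaledMat n y).map (fun t => (t : ℂ)) - z • 1)⁻¹‖ := by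
        rw [stMat, stMat, ← mul_sub, norm_mul, norm_inv, Complex.norm_natCast]
    _ ≤ (n : ℝ)⁻¹ * (√((n : ℝ)⁻¹ * Q) * (√n * (z.im ^ 2)⁻¹)) := by gcongr
    _ = (z.im ^ 2)⁻¹ * √(((n : ℝ) ^ 2)⁻¹ * Q) := by
      rcases n.eq_zero_or_pos with rfl | hn
      · simp
      rw [Real.sqrt_mul (by positivity), Real.sqrt_mul (by positivity), Real.sqrt_inv,
        Real.sqrt_inv, Real.sqrt_sq (by positivity)]
      field_simp

end RMT
end
end
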